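/- Every lace diagram for (e_0,...,e_n) with rank conditions r has length at least d(r) = sum over 0 <= i < j <= n of (r_{i,j-1} - r_{ij})(r_{i+1,j} - r_{ij}); in other words, the smallest possible length of a lace diagram with rank conditions r is d(r). -/

import Mathlib

open MvPolynomial

/-! Common setup.  Dots in columns, positions in permutations, and variable
indices are all 0-indexed: dot `q` (0-indexed) of column `i` is dot `q+1`
(1-indexed) in the paper, the variable `(i, j) : ℕ × ℕ` is the Chern root
`x^i_{j+1}`, and in the Schubert variable type `ℕ ⊕ ℕ`, `Sum.inl a` is
`x_{a+1}` and `Sum.inr b` is `y_{b+1}`. -/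

/-- Coxeter length = number of inversions of a (finitely supported) permutation of ℕ. -/
noncomputable def ell (w : Equiv.Perm ℕ) : ℕ :=
  {p : ℕ × ℕ | p.1 < p.2 ∧ w p.2 < w p.1}.ncard

/-- A finitely supported permutation of ℕ. -/
def FinSupp (w : Equiv.Perm ℕ) : Prop := {x | w x ≠ x}.Finite

/-- A lace diagram for the dimension vector `e 0, …, e n`, encoded as a sequence
`w 1, …, w n` of finitely supported permutations of ℕ (normalized so that
`w i = 1` outside `1 ≤ i ≤ n`): all descent positions of `w i` are `< e i` and
all descent positions of `(w i)⁻¹` are `< e (i-1)` (0-indexed positions). -/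
def IsLace (n : ℕ) (e : ℕ → ℕ) (w : ℕ → Equiv.Perm ℕ) : Prop :=
  (∀ i, i = 0 ∨ n < i → w i = 1) ∧
  ∀ i, 1 ≤ i → i ≤ n → FinSupp (w i) ∧
    (∀ k, w i (k + 1) < w i k → k < e i) ∧
    (∀ k, (w i)⁻¹ (k + 1) < (w i)⁻¹ k → k < e (i - 1))

/-- `chain w i k p = (w k)⁻¹ (⋯ ((w (i+1))⁻¹ p))` for `k ≥ i`, and `p` for `k ≤ i`. -/
def chain (w : ℕ → Equiv.Perm ℕ) (i : ℕ) : ℕ → ℕ → ℕ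
  | 0, p => p
  | k + 1, p => if k + 1 ≤ i then p else (w (k + 1))⁻¹ (chain w i k p)

/-- The rank conditions of a lace diagram: `rank e w i j` is the number of dots
`p < e i` of column `i` whose strand continues through column `j`. -/
noncomputable def rank (e : ℕ → ℕ) (w : ℕ → Equiv.Perm ℕ) (i j : ℕ) : ℕ :=
  {p : ℕ | p < e i ∧ ∀ k, i < k → k ≤ j → chain w i k p < e k}.ncard

/-- The lace diagram `w` has rank conditions `r` (for `0 ≤ i ≤ j ≤ n`). -/
def RankEq (n : ℕ) (e : ℕ → ℕ) (w : ℕ → Equiv.Perm ℕ) (r : ℕ → ℕ → ℕ) : Prop :=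
  ∀ i j, i ≤ j → j ≤ n → rank e w i j = r i j

/-- The length of a lace diagram. -/
noncomputable def diagLength (n : ℕ) (w : ℕ → Equiv.Perm ℕ) : ℕ :=
  ∑ i ∈ Finset.Icc 1 n, ell (w i)

/-- The expected codimension `d(r)`. -/
def codim (n : ℕ) (r : ℕ → ℕ → ℕ) : ℕ :=
  ∑ i ∈ Finset.range (n + 1), ∑ j ∈ Finset.range (n + 1),
    if i < j then (r i (j - 1) - r i j) * (r (i + 1) j - r i j) else 0

/-- A minimal lace diagram: its length equals the expected codimension of its
rank conditions. -/
def IsMinimal (n : ℕ) (e : ℕ → ℕ) (w : ℕ → Equiv.Perm ℕ) : Prop :=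
  IsLace n e w ∧ diagLength n w = codim n (rank e w)

/-- The longest element of `S m` (0-indexed), as a permutation of ℕ. -/
def longest (m : ℕ) : Equiv.Perm ℕ where
  toFun i := if i < m then m - 1 - i else i
  invFun i := if i < m then m - 1 - i else i
  left_inv i := by dsimp only; split_ifs <;> omega
  right_inv i := by dsimp only; split_ifs <;> omega

/-- Interchanging the x-variables `x (i+1)` and `x (i+2)` (0-indexed: `inl i`
and `inl (i+1)`). -/
noncomputable def sX (i : ℕ) (f : MvPolynomial (ℕ ⊕ ℕ) ℤ) : MvPolynomial (ℕ ⊕ ℕ) ℤ :=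
  rename (Sum.map (Equiv.swap i (i + 1)) id) f

/-- `S` is the family of double Schubert polynomials `S w = 𝔖_w(x; y)`:
it takes the prescribed product value on each longest element, it satisfies the
divided difference recursion `(x i - x (i+1)) * S (w * s i) = S w - (S w)^{s i}`
when `w` has a descent at `i` and `(S w)^{s i} = S w` otherwise, and only the
variables up to the last descents of `w` and `w⁻¹` occur in `S w`. -/
def IsSchubertFamily (S : Equiv.Perm ℕ → MvPolynomial (ℕ ⊕ ℕ) ℤ) : Prop :=
  (∀ m : ℕ, S (longest m) =
      ∏ i ∈ Finset.range m, ∏ j ∈ Finset.range m,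
        if i + j + 2 ≤ m then X (Sum.inl i) - X (Sum.inr j) else 1) ∧
  (∀ w : Equiv.Perm ℕ, FinSupp w → ∀ i : ℕ,
    (w (i + 1) < w i →
      (X (Sum.inl i) - X (Sum.inl (i + 1))) * S (w * Equiv.swap i (i + 1)) =
        S w - sX i (S w)) ∧
    (w i < w (i + 1) → sX i (S w) = S w)) ∧
  (∀ w : Equiv.Perm ℕ, FinSupp w → ∀ k l : ℕ,
    (∀ t, k ≤ t → ¬w (t + 1) < w t) → (∀ t, l ≤ t → ¬w⁻¹ (t + 1) < w⁻¹ t) →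
    ∀ v ∈ (S w).vars, (∃ a < k, v = Sum.inl a) ∨ (∃ b < l, v = Sum.inr b))

/-- The product `S(w) = 𝔖_{w 1}(x^1;x^0) ⋯ 𝔖_{w n}(x^n;x^{n-1})`, in the
variables `(i, j) = x^i_{j+1}`. -/
noncomputable def Sprod (n : ℕ) (S : Equiv.Perm ℕ → MvPolynomial (ℕ ⊕ ℕ) ℤ)
    (w : ℕ → Equiv.Perm ℕ) : MvPolynomial (ℕ × ℕ) ℤ :=
  ∏ i ∈ Finset.Icc 1 n,
    rename (Sum.elim (fun a => (i, a)) (fun b => (i - 1, b))) (S (w i))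

/-- The component-formula polynomial `Q_r`: the sum of `Sprod n S w` over all
minimal lace diagrams `w` with rank conditions `r`. -/
noncomputable def Qpoly (n : ℕ) (e : ℕ → ℕ) (r : ℕ → ℕ → ℕ)
    (S : Equiv.Perm ℕ → MvPolynomial (ℕ ⊕ ℕ) ℤ) : MvPolynomial (ℕ × ℕ) ℤ :=
  ∑ᶠ (w : ℕ → Equiv.Perm ℕ) (_ : IsMinimal n e w ∧ RankEq n e w r), Sprod n S w

/-- The shifted permutation `1^k × w`: fixes `0, …, k-1` (0-indexed) and sends
`k + j` to `k + w j`. -/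
def shiftPerm (k : ℕ) (w : Equiv.Perm ℕ) : Equiv.Perm ℕ where
  toFun j := if j < k then j else w (j - k) + k
  invFun j := if j < k then j else w⁻¹ (j - k) + k
  left_inv j := by
    dsimp only
    by_cases h : j < k
    · simp [h]
    · have h1 : ¬ w (j - k) + k < k := by omega
      simp only [if_neg h, if_neg h1, Nat.add_sub_cancel, Equiv.Perm.coe_inv, Equiv.symm_apply_apply]
      omega
  right_inv j := by
    dsimp only
    by_cases h : j < k
    · simp [h]
    · have h1 : ¬ w⁻¹ (j - k) + k < k := by omega
      simp only [if_neg h, if_neg h1, Nat.add_sub_cancel]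
      have h2 : w (w⁻¹ (j - k)) = j - k := Equiv.apply_symm_apply w (j - k)
      omega

/-- The lace diagram `(1^k × w 1, …, 1^k × w n)`. -/
def shiftDiag (k : ℕ) (w : ℕ → Equiv.Perm ℕ) : ℕ → Equiv.Perm ℕ :=
  fun i => shiftPerm k (w i)

/-- The transformation of lace diagrams, allowed at `(i, j)` (0-indexed `j`,
so `j + 1 < e i`) when exactly one of the two descent conditions holds; it
replaces `w i` by `w i * s j` and `w (i+1)` by `s j * w (i+1)`. -/
def TransStep (n : ℕ) (e : ℕ → ℕ) (w w' : ℕ → Equiv.Perm ℕ) : Prop :=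
  IsLace n e w ∧ ∃ i j, 1 ≤ i ∧ i + 1 ≤ n ∧ j + 1 < e i ∧
    Xor' (w i (j + 1) < w i j) ((w (i + 1))⁻¹ (j + 1) < (w (i + 1))⁻¹ j) ∧
    w' = Function.update (Function.update w i (w i * Equiv.swap j (j + 1))) (i + 1)
          (Equiv.swap j (j + 1) * w (i + 1))

/-- The column where the strand through dot `q` of column `c` starts. -/
def startCol (e : ℕ → ℕ) (w : ℕ → Equiv.Perm ℕ) : ℕ → ℕ → ℕ
  | 0, _ => 0
  | c + 1, q => if w (c + 1) q < e c then startCol e w c (w (c + 1) q) else c + 1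

/-- The starting dot `(column, position)` of the strand through dot `q` of column `c`. -/
def startDot (e : ℕ → ℕ) (w : ℕ → Equiv.Perm ℕ) : ℕ → ℕ → ℕ × ℕ
  | 0, q => (0, q)
  | c + 1, q => if w (c + 1) q < e c then startDot e w c (w (c + 1) q) else (c + 1, q)

def endColAux (e : ℕ → ℕ) (w : ℕ → Equiv.Perm ℕ) : ℕ → ℕ → ℕ → ℕ
  | 0, c, _ => c
  | f + 1, c, q =>
      if (w (c + 1))⁻¹ q < e (c + 1) then endColAux e w f (c + 1) ((w (c + 1))⁻¹ q) else c

/-- The column where the strand through dot `q` of column `c` terminates. -/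
def endCol (n : ℕ) (e : ℕ → ℕ) (w : ℕ → Equiv.Perm ℕ) (c q : ℕ) : ℕ :=
  endColAux e w (n - c) c q

/-- `w` is the left-most lace diagram (for its rank conditions): it is a lace
diagram such that in every column the strands are sorted from top to bottom by
starting column (ascending) and then by terminating column (descending), exactly
as produced by the construction which adds, for `i = 0, …, n` and `j = n, …, i`,
all strands from column `i` to column `j` to the bottom of the diagram; and
strands with the same start and end do not cross. -/
def IsLeftmost (n : ℕ) (e : ℕ → ℕ) (w : ℕ → Equiv.Perm ℕ) : Prop :=
  IsLace n e w ∧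
  (∀ c, c ≤ n → ∀ q q', q < q' → q' < e c →
    startCol e w c q < startCol e w c q' ∨
      (startCol e w c q = startCol e w c q' ∧ endCol n e w c q' ≤ endCol n e w c q)) ∧
  (∀ c, 1 ≤ c → c ≤ n → ∀ q q', q < q' → q' < e c →
    startCol e w c q = startCol e w c q' → endCol n e w c q = endCol n e w c q' →
    w c q < w c q')

/-- The substitution homomorphism `φ_u` of a lace diagram `u`: it sends the
variable `x^i_j` to the variable `b_S` of the strand `S` of `u` through dot
`(i, j)`, where the strand variables are realized as the variables indexed by
the starting dots of strands. -/
noncomputable def phiMap (e : ℕ → ℕ) (u : ℕ → Equiv.Perm ℕ) :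
    MvPolynomial (ℕ × ℕ) ℤ →ₐ[ℤ] MvPolynomial (ℕ × ℕ) ℤ :=
  rename fun p => startDot e u p.1 p.2

/-- The product of the simple transpositions `s (i+1)` (1-indexed) for `i` in `l`. -/
def wordProd (l : List ℕ) : Equiv.Perm ℕ := (l.map fun i => Equiv.swap i (i + 1)).prod

/-- A reduced word for a finitely supported permutation of ℕ. -/
def IsReducedWord (u : Equiv.Perm ℕ) (l : List ℕ) : Prop :=
  wordProd l = u ∧ l.length = ell u

/-- Bruhat order: some reduced word for `u` contains a subword which is a
reduced word for `w`. -/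
def BruhatLE (w u : Equiv.Perm ℕ) : Prop :=
  ∃ l l', IsReducedWord u l ∧ IsReducedWord w l' ∧ l'.Sublist l

/-!
Lower bound. For `i < j`, pair a strand through column `i` that reaches column `j - 1` but not
`j` (there are `r i (j-1) - r i j` of them) with a strand starting at column `i + 1` and reaching
column `j` (there are `r (i+1) j - r i j`). Seen from column `i` the second strand lies below the
first, at column `j` above it, so they cross at a first column `k`, giving an inversion of `w k`.
The inversion determines the pair: following the upper strand back to where it starts recovers
`i` and the second strand, following the lower one forward to where it ends recovers `j` and the
first. Hence `codim n r ≤ diagLength n w`.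

Attainment. The inclusion-exclusion numbers `r a b - r (a-1) b - r a (b+1) + r (a-1) (b+1)` are
non-negative and count the strands from column `a` to column `b`. In the leftmost diagram built
from them, every column lists its strands by start column and then by decreasing end column.
Then the crossings in `w c` are exactly those of a strand continuing through `c` with a strand
ending at `c - 1` that starts earlier, and of a strand starting at `c` with any strand ending at
`c - 1`; counting them gives `codim n r`.
-/

theorem Equiv.Perm.inv_apply_self {α : Type*} (f : Equiv.Perm α) (x : α) : f⁻¹ (f x) = x :=
  f.symm_apply_apply x

theorem Equiv.Perm.apply_inv_self {α : Type*} (f : Equiv.Perm α) (x : α) : f (f⁻¹ x) = x :=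
  f.apply_symm_apply x

namespace Finset

variable {ι β : Type*} [DecidableEq ι] [DecidableEq β]

theorem mem_biUnion_image_prodMk {s : Finset ι} {t : ι → Finset β} {i : ι} {b : β} :
    (i, b) ∈ s.biUnion (fun i => (t i).image (Prod.mk i)) ↔ i ∈ s ∧ b ∈ t i := by
  simp only [mem_biUnion, mem_image, Prod.mk.injEq]
  constructor
  · rintro ⟨i, hi, b, hb, rfl, rfl⟩
    exact ⟨hi, hb⟩
  · rintro ⟨hi, hb⟩
    exact ⟨i, hi, b, hb, rfl, rfl⟩

theorem card_biUnion_image_prodMk (s : Finset ι) (t : ι → Finset β) :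
    (s.biUnion fun i => (t i).image (Prod.mk i)).card = ∑ i ∈ s, (t i).card := by
  rw [card_biUnion]
  · exact sum_congr rfl fun i _ => card_image_of_injective _ (Prod.mk_right_injective i)
  · intro i _ i' _ hne
    simp only [Function.onFun, disjoint_left, mem_image]
    rintro _ ⟨b, _, rfl⟩ ⟨b', _, h⟩
    exact hne (congrArg Prod.fst h).symm

theorem card_filter_add_card_le {α : Type*} [DecidableEq α] {s t : Finset α} (h : t ⊆ s)
    (P : α → Prop) [DecidablePred P] :
    (s.filter P).card + t.card ≤ s.card + (t.filter P).card := by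
  have hsplit : s.filter P = (s \ t).filter P ∪ t.filter P := by
    rw [← filter_union, sdiff_union_of_subset h]
  have := card_union_le ((s \ t).filter P) (t.filter P)
  have := card_filter_le (s \ t) P
  have := card_sdiff_add_card_eq_card h
  rw [hsplit]
  omega

end Finset

open Finset

section Chain

variable (w : ℕ → Equiv.Perm ℕ)

theorem chain_of_le {i k : ℕ} (h : k ≤ i) (p : ℕ) : chain w i k p = p := by
  induction k with
  | zero => rfl
  | succ m _ => rw [chain, if_pos h]

theorem chain_self (i p : ℕ) : chain w i i p = p :=
  chain_of_le w le_rfl p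

theorem chain_succ {i k : ℕ} (h : i ≤ k) (p : ℕ) :
    chain w i (k + 1) p = (w (k + 1))⁻¹ (chain w i k p) := by
  rw [chain, if_neg (by omega)]

theorem apply_chain_succ {i k : ℕ} (h : i ≤ k) (p : ℕ) :
    w (k + 1) (chain w i (k + 1) p) = chain w i k p := by
  rw [chain_succ w h, Equiv.Perm.apply_inv_self]

theorem chain_apply_succ {i k : ℕ} (h : i + 1 ≤ k) (q : ℕ) :
    chain w i k (w (i + 1) q) = chain w (i + 1) k q := by
  induction k, h using Nat.le_induction with
  | base => rw [chain_succ w le_rfl, chain_self, chain_self, Equiv.Perm.inv_apply_self]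
  | succ k hk ih => rw [chain_succ w (by omega), chain_succ w hk, ih]

variable {w}

theorem chain_eq_chain_of_le {i i' m k p p' : ℕ} (him : i ≤ m) (hi'm : i' ≤ m) (hmk : m ≤ k)
    (h : chain w i k p = chain w i' k p') : chain w i m p = chain w i' m p' := by
  induction k, hmk using Nat.le_induction with
  | base => exact h
  | succ k hmk ih =>
    apply ih
    rw [← apply_chain_succ w (by omega), ← apply_chain_succ w (by omega) p', h]

theorem chain_eq_chain_of_ge {i i' k m p p' : ℕ} (hik : i ≤ k) (hi'k : i' ≤ k) (hkm : k ≤ m)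
    (h : chain w i k p = chain w i' k p') : chain w i m p = chain w i' m p' := by
  induction m, hkm using Nat.le_induction with
  | base => exact h
  | succ m hkm ih => rw [chain_succ w (by omega), chain_succ w (by omega), ih]

end Chain

section Inversions

def inversionFinset (w : Equiv.Perm ℕ) (N : ℕ) : Finset (ℕ × ℕ) :=
  (range N ×ˢ range N).filter fun p => p.1 < p.2 ∧ w p.2 < w p.1

variable {w : Equiv.Perm ℕ} {N : ℕ}

theorem mem_inversionFinset (hN : ∀ x, N ≤ x → w x = x) {x y : ℕ} :
    (x, y) ∈ inversionFinset w N ↔ x < y ∧ w y < w x := by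
  simp only [inversionFinset, mem_filter, mem_product, mem_range, and_iff_right_iff_imp]
  rintro ⟨hxy, hw⟩
  have hyN : y < N := by
    by_contra hy
    have hwy : w y = y := hN y (not_lt.1 hy)
    have hwx : w (w x) = w x := hN _ (by omega)
    have := w.injective hwx
    omega
  omega

theorem ell_eq_card_inversionFinset (hN : ∀ x, N ≤ x → w x = x) :
    ell w = (inversionFinset w N).card := by
  rw [ell, ← Set.ncard_coe_finset]
  congr 1
  ext ⟨x, y⟩
  rw [mem_coe, mem_inversionFinset hN]
  rfl

noncomputable def suppBound (w : Equiv.Perm ℕ) : ℕ :=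
  sSup {x | w x ≠ x} + 1

theorem FinSupp.apply_eq_self_of_suppBound_le (hw : FinSupp w) {x : ℕ} (hx : suppBound w ≤ x) :
    w x = x := by
  by_contra hwx
  have := le_csSup hw.bddAbove hwx
  rw [suppBound] at hx
  omega

end Inversions

section Survivors

open scoped Classical in
noncomputable def survivors (e : ℕ → ℕ) (w : ℕ → Equiv.Perm ℕ) (i j : ℕ) : Finset ℕ :=
  (range (e i)).filter fun p => ∀ k, i < k → k ≤ j → chain w i k p < e k

variable (e : ℕ → ℕ) (w : ℕ → Equiv.Perm ℕ)

theorem mem_survivors {i j p : ℕ} :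
    p ∈ survivors e w i j ↔ p < e i ∧ ∀ k, i < k → k ≤ j → chain w i k p < e k := by
  simp [survivors]

theorem rank_eq_card_survivors (i j : ℕ) : rank e w i j = (survivors e w i j).card := by
  rw [rank, ← Set.ncard_coe_finset]
  congr 1
  ext p
  rw [mem_coe, mem_survivors]
  rfl

theorem survivors_anti {i j j' : ℕ} (h : j ≤ j') : survivors e w i j' ⊆ survivors e w i j := by
  intro p hp
  rw [mem_survivors] at hp ⊢
  exact ⟨hp.1, fun k hk hkj => hp.2 k hk (hkj.trans h)⟩

theorem survivors_self (i : ℕ) : survivors e w i i = range (e i) := by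
  ext p
  simp only [mem_survivors, mem_range]
  exact ⟨fun h => h.1, fun h => ⟨h, fun k hk hki => absurd hki (by omega)⟩⟩

theorem card_survivors_eq_card_filter {i j : ℕ} (hij : i < j) :
    (survivors e w i j).card =
      ((survivors e w (i + 1) j).filter fun q => w (i + 1) q < e i).card := by
  apply card_bij' (fun p _ => (w (i + 1))⁻¹ p) (fun q _ => w (i + 1) q)
  · intro p hp
    rw [mem_survivors] at hp
    simp only [mem_filter, mem_survivors, Equiv.Perm.apply_inv_self]
    refine ⟨⟨?_, fun k hk hkj => ?_⟩, hp.1⟩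
    · simpa only [chain_succ w le_rfl, chain_self] using hp.2 (i + 1) (by omega) (by omega)
    · rw [← chain_apply_succ w (by omega), Equiv.Perm.apply_inv_self]
      exact hp.2 k (by omega) hkj
  · intro q hq
    simp only [mem_filter, mem_survivors] at hq ⊢
    refine ⟨hq.2, fun k hk hkj => ?_⟩
    rcases (show i + 1 = k ∨ i + 1 < k by omega) with rfl | hk'
    · rw [chain_succ w le_rfl, chain_self, Equiv.Perm.inv_apply_self]
      exact hq.1.1
    · rw [chain_apply_succ w hk]
      exact hq.1.2 k hk' hkj
  · exact fun p _ => Equiv.Perm.apply_inv_self _ _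
  · exact fun q _ => Equiv.Perm.inv_apply_self _ _

end Survivors

/-! ### The lower bound -/

section LowerBound

variable {n : ℕ} {e : ℕ → ℕ} {w : ℕ → Equiv.Perm ℕ} {r : ℕ → ℕ → ℕ}

noncomputable def endsBefore (e : ℕ → ℕ) (w : ℕ → Equiv.Perm ℕ) (i j : ℕ) : Finset ℕ :=
  survivors e w i (j - 1) \ survivors e w i j

noncomputable def startsAfter (e : ℕ → ℕ) (w : ℕ → Equiv.Perm ℕ) (i j : ℕ) : Finset ℕ :=
  (survivors e w (i + 1) j).filter fun q => e i ≤ w (i + 1) q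

theorem card_endsBefore (hr : RankEq n e w r) {i j : ℕ} (hij : i < j) (hjn : j ≤ n) :
    (endsBefore e w i j).card = r i (j - 1) - r i j := by
  rw [endsBefore, card_sdiff_of_subset (survivors_anti e w (by omega)),
    ← rank_eq_card_survivors, ← rank_eq_card_survivors,
    hr i (j - 1) (Nat.le_sub_one_of_lt hij) (by omega), hr i j hij.le hjn]

theorem card_startsAfter (hr : RankEq n e w r) {i j : ℕ} (hij : i < j) (hjn : j ≤ n) :
    (startsAfter e w i j).card = r (i + 1) j - r i j := by
  have hsplit := card_filter_add_card_filter_not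
    (s := survivors e w (i + 1) j) (p := fun q => w (i + 1) q < e i)
  rw [← rank_eq_card_survivors, hr (i + 1) j hij hjn, ← card_survivors_eq_card_filter e w hij,
    ← rank_eq_card_survivors, hr i j hij.le hjn] at hsplit
  simp only [not_lt] at hsplit
  rw [startsAfter]
  omega

theorem chain_of_mem_endsBefore {i j p : ℕ} (hp : p ∈ endsBefore e w i j) :
    (∀ m, i ≤ m → m < j → chain w i m p < e m) ∧ e j ≤ chain w i j p := by
  rw [endsBefore, mem_sdiff, mem_survivors, mem_survivors] at hp
  obtain ⟨⟨hpe, hsurv⟩, hdies⟩ := hp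
  have alive : ∀ m, i ≤ m → m < j → chain w i m p < e m := fun m him hmj => by
    rcases him.eq_or_lt with rfl | him
    · rwa [chain_self]
    · exact hsurv m him (by omega)
  refine ⟨alive, ?_⟩
  by_contra hlt
  exact hdies ⟨hpe, fun k hik hkj => (show k < j ∨ k = j by omega).elim
    (alive k hik.le) (fun hkj => hkj ▸ not_le.1 hlt)⟩

theorem chain_of_mem_startsAfter {i j q : ℕ} (hq : q ∈ startsAfter e w i j) :
    e i ≤ w (i + 1) q ∧ ∀ m, i < m → m ≤ j → chain w i m (w (i + 1) q) < e m := by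
  rw [startsAfter, mem_filter, mem_survivors] at hq
  obtain ⟨⟨hqe, hsurv⟩, hge⟩ := hq
  refine ⟨hge, fun m him hmj => ?_⟩
  rw [chain_apply_succ w him]
  rcases (show i + 1 = m ∨ i + 1 < m by omega) with rfl | him'
  · rwa [chain_self]
  · exact hsurv m him' hmj

noncomputable def codimSet (n : ℕ) (e : ℕ → ℕ) (w : ℕ → Equiv.Perm ℕ) :
    Finset ((ℕ × ℕ) × (ℕ × ℕ)) :=
  ((range (n + 1) ×ˢ range (n + 1)).filter fun ij => ij.1 < ij.2).biUnion fun ij =>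
    (endsBefore e w ij.1 ij.2 ×ˢ startsAfter e w ij.1 ij.2).image (Prod.mk ij)

theorem mem_codimSet {i j p q : ℕ} :
    ((i, j), (p, q)) ∈ codimSet n e w ↔
      i < j ∧ j ≤ n ∧ p ∈ endsBefore e w i j ∧ q ∈ startsAfter e w i j := by
  rw [codimSet, mem_biUnion_image_prodMk, mem_filter, mem_product, mem_product, mem_range,
    mem_range]
  constructor
  · rintro ⟨⟨⟨-, hj⟩, hij⟩, hp, hq⟩
    exact ⟨hij, Nat.lt_succ_iff.1 hj, hp, hq⟩
  · rintro ⟨hij, hjn, hp, hq⟩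
    exact ⟨⟨⟨by omega, by omega⟩, hij⟩, hp, hq⟩

theorem card_codimSet (hr : RankEq n e w r) : (codimSet n e w).card = codim n r := by
  rw [codimSet, card_biUnion_image_prodMk, sum_filter, sum_product, codim]
  refine sum_congr rfl fun i _ => sum_congr rfl fun j hj => ?_
  split_ifs with hij
  · rw [card_product, card_endsBefore hr hij (by simpa [Nat.lt_succ_iff] using hj),
      card_startsAfter hr hij (by simpa [Nat.lt_succ_iff] using hj)]
  · rfl

noncomputable def inversionTriples (n : ℕ) (w : ℕ → Equiv.Perm ℕ) : Finset (ℕ × (ℕ × ℕ)) :=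
  (Icc 1 n).biUnion fun k => (inversionFinset (w k) (suppBound (w k))).image (Prod.mk k)

theorem card_inversionTriples (hw : IsLace n e w) :
    (inversionTriples n w).card = diagLength n w := by
  rw [inversionTriples, card_biUnion_image_prodMk, diagLength]
  refine sum_congr rfl fun k hk => ?_
  rw [mem_Icc] at hk
  exact (ell_eq_card_inversionFinset fun x =>
    (hw.2 k hk.1 hk.2).1.apply_eq_self_of_suppBound_le).symm

/-- Seen from column `i`, the strand through dot `q` of column `i + 1` sits at `w (i + 1) q`;
this is the first column where it lies above the strand through dot `p` of column `i`. -/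
noncomputable def firstCrossing (w : ℕ → Equiv.Perm ℕ) (i j p q : ℕ) : ℕ :=
  sInf {k | i < k ∧ k ≤ j ∧ chain w i k (w (i + 1) q) < chain w i k p}

theorem firstCrossing_spec {i j p q : ℕ} (hij : i < j) (hp : p ∈ endsBefore e w i j)
    (hq : q ∈ startsAfter e w i j) :
    let k := firstCrossing w i j p q
    i < k ∧ k ≤ j ∧ chain w i k (w (i + 1) q) < chain w i k p ∧
      w k (chain w i k p) < w k (chain w i k (w (i + 1) q)) := by
  obtain ⟨hpalive, hpdead⟩ := chain_of_mem_endsBefore hp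
  obtain ⟨hqbelow, hqalive⟩ := chain_of_mem_startsAfter hq
  have hne : {k | i < k ∧ k ≤ j ∧ chain w i k (w (i + 1) q) < chain w i k p}.Nonempty :=
    ⟨j, hij, le_rfl, (hqalive j hij le_rfl).trans_le hpdead⟩
  intro k
  obtain ⟨hik, hkj, hcross⟩ : k ∈ _ := Nat.sInf_mem hne
  refine ⟨hik, hkj, hcross, ?_⟩
  obtain ⟨m, hm⟩ : ∃ m, k = m + 1 := ⟨k - 1, by omega⟩
  rw [hm] at hcross ⊢
  rw [apply_chain_succ w (by omega), apply_chain_succ w (by omega)]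
  have hdistinct : chain w i m p ≠ chain w i m (w (i + 1) q) := fun h => by
    rw [chain_succ w (by omega), chain_succ w (by omega), h] at hcross
    exact lt_irrefl _ hcross
  rcases (show i = m ∨ i < m by omega) with rfl | him
  · rw [chain_self, chain_self]
    have := hpalive i le_rfl hij
    rw [chain_self] at this
    omega
  · have hnot : m ∉ {k | i < k ∧ k ≤ j ∧ chain w i k (w (i + 1) q) < chain w i k p} :=
      Nat.notMem_of_lt_sInf (show m < k by omega)
    simp only [Set.mem_ofPred_eq, not_and, not_lt] at hnot
    exact lt_of_le_of_ne (hnot him (by omega)) hdistinct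

noncomputable def crossing (w : ℕ → Equiv.Perm ℕ) (x : (ℕ × ℕ) × (ℕ × ℕ)) : ℕ × (ℕ × ℕ) :=
  let k := firstCrossing w x.1.1 x.1.2 x.2.1 x.2.2
  (k, chain w x.1.1 k (w (x.1.1 + 1) x.2.2), chain w x.1.1 k x.2.1)

theorem crossing_mapsTo (hw : IsLace n e w) :
    Set.MapsTo (crossing w) (codimSet n e w) (inversionTriples n w) := by
  rintro ⟨⟨i, j⟩, p, q⟩ hx
  obtain ⟨hij, hjn, hp, hq⟩ := mem_codimSet.1 hx
  obtain ⟨hik, hkj, hcross, hinv⟩ := firstCrossing_spec hij hp hq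
  simp only [mem_coe, crossing, inversionTriples, mem_biUnion_image_prodMk, mem_Icc]
  rw [mem_inversionFinset fun x => (hw.2 _ (by omega) (by omega)).1.apply_eq_self_of_suppBound_le]
  exact ⟨⟨by omega, by omega⟩, hcross, hinv⟩

theorem chain_startsAfter_ne_of_lt {i i' j j' k q q' : ℕ} (hq : q ∈ startsAfter e w i j)
    (hq' : q' ∈ startsAfter e w i' j') (hii' : i < i') (hi'k : i' < k) (hkj : k ≤ j) :
    chain w i k (w (i + 1) q) ≠ chain w i' k (w (i' + 1) q') := fun h => by
  have h' := chain_eq_chain_of_le hii'.le le_rfl hi'k.le h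
  rw [chain_self] at h'
  have := (chain_of_mem_startsAfter hq).2 i' hii' (by omega)
  have := (chain_of_mem_startsAfter hq').1
  omega

theorem chain_endsBefore_ne_of_lt {i j j' k p p' : ℕ} (hp : p ∈ endsBefore e w i j)
    (hp' : p' ∈ endsBefore e w i j') (hjj' : j < j') (hik : i ≤ k) (hkj : k ≤ j) :
    chain w i k p ≠ chain w i k p' := fun h => by
  have h' := chain_eq_chain_of_ge hik hik hkj h
  have := (chain_of_mem_endsBefore hp).2
  have := (chain_of_mem_endsBefore hp').1 j (by omega) hjj'
  omega

theorem crossing_injOn : Set.InjOn (crossing w) (codimSet n e w) := by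
  rintro ⟨⟨i, j⟩, p, q⟩ hx ⟨⟨i', j'⟩, p', q'⟩ hx' heq
  obtain ⟨hij, -, hp, hq⟩ := mem_codimSet.1 hx
  obtain ⟨hij', -, hp', hq'⟩ := mem_codimSet.1 hx'
  obtain ⟨hik, hkj, -⟩ := firstCrossing_spec hij hp hq
  obtain ⟨hik', hkj', -⟩ := firstCrossing_spec hij' hp' hq'
  simp only [crossing, Prod.mk.injEq] at heq
  obtain ⟨hk, hqq, hpp⟩ := heq
  set k := firstCrossing w i j p q
  rw [← hk] at hik' hkj' hqq hpp
  obtain rfl : i = i' := by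
    by_contra hne
    rcases Nat.lt_or_gt_of_ne hne with h | h
    · exact chain_startsAfter_ne_of_lt hq hq' h hik' hkj hqq
    · exact chain_startsAfter_ne_of_lt hq' hq h hik hkj' hqq.symm
  obtain rfl : q = q' := by
    simpa only [chain_apply_succ w le_rfl, chain_self] using
      chain_eq_chain_of_le (i := i) (i' := i) (m := i + 1) (by omega) (by omega) hik hqq
  obtain rfl : j = j' := by
    by_contra hne
    rcases Nat.lt_or_gt_of_ne hne with h | h
    · exact chain_endsBefore_ne_of_lt hp hp' h hik.le hkj hpp
    · exact chain_endsBefore_ne_of_lt hp' hp h hik.le hkj' hpp.symm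
  obtain rfl : p = p' := by
    simpa only [chain_self] using chain_eq_chain_of_le le_rfl le_rfl hik.le hpp
  rfl

theorem codim_le_diagLength (hw : IsLace n e w) (hr : RankEq n e w r) :
    codim n r ≤ diagLength n w := by
  rw [← card_codimSet hr, ← card_inversionTriples hw]
  exact card_le_card_of_injOn (crossing w) (crossing_mapsTo hw) crossing_injOn

end LowerBound

/-! ### The leftmost lace diagram -/

section BlockIndex

/-- For monotone `f` with `f 0 = 0`, the index `a ≤ c` of the block `[f a, f (a + 1))`
containing `q`. -/
def blockIndex (f : ℕ → ℕ) (c q : ℕ) : ℕ :=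
  Nat.findGreatest (fun a => f a ≤ q) c

variable {f : ℕ → ℕ} {c q : ℕ}

theorem blockIndex_spec (h0 : f 0 = 0) (hq : q < f (c + 1)) :
    f (blockIndex f c q) ≤ q ∧ q < f (blockIndex f c q + 1) ∧ blockIndex f c q ≤ c := by
  have hle : f (blockIndex f c q) ≤ q :=
    Nat.findGreatest_spec (P := fun a => f a ≤ q) (Nat.zero_le c) (by omega)
  have hbd : blockIndex f c q ≤ c := Nat.findGreatest_le c
  refine ⟨hle, ?_, hbd⟩
  rcases hbd.eq_or_lt with hc | hc
  · rwa [hc]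
  · by_contra hcon
    have : blockIndex f c q + 1 ≤ blockIndex f c q :=
      Nat.le_findGreatest (P := fun a => f a ≤ q) hc (not_lt.1 hcon)
    omega

theorem blockIndex_spec_of_lt (hf : Monotone f) (h0 : f 0 = 0) (hq : q < f c) :
    f (blockIndex f c q) ≤ q ∧ q < f (blockIndex f c q + 1) ∧ blockIndex f c q < c := by
  obtain ⟨h1, h2, h3⟩ := blockIndex_spec h0 (hq.trans_le (hf c.le_succ))
  refine ⟨h1, h2, h3.lt_of_ne fun h => ?_⟩
  rw [h] at h1
  omega

theorem blockIndex_eq (hf : Monotone f) {a : ℕ} (ha : a ≤ c) (h1 : f a ≤ q) (h2 : q < f (a + 1)) :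
    blockIndex f c q = a := by
  have hge : a ≤ blockIndex f c q := Nat.le_findGreatest ha h1
  by_contra hne
  have hle : f (blockIndex f c q) ≤ q :=
    Nat.findGreatest_spec (P := fun a => f a ≤ q) ha h1
  have := hf (show a + 1 ≤ blockIndex f c q by omega)
  omega

theorem exists_block (hf : Monotone f) (h0 : f 0 = 0) (hq : q < f c) :
    ∃ a < c, ∃ t, f a + t < f (a + 1) ∧ q = f a + t := by
  obtain ⟨h1, h2, h3⟩ := blockIndex_spec_of_lt hf h0 hq
  exact ⟨_, h3, q - f (blockIndex f c q), by omega, by omega⟩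

theorem le_of_block_le_block (hf : Monotone f) {a a' x y : ℕ} (hx : f a ≤ x)
    (hy : y < f (a' + 1)) (hxy : x ≤ y) : a ≤ a' := by
  by_contra h
  have := hf (show a' + 1 ≤ a by omega)
  omega

theorem sum_blockIndex (hf : Monotone f) (h0 : f 0 = 0) (g : ℕ → ℕ) :
    ∑ x ∈ range (f (c + 1)), g (blockIndex f c x) =
      ∑ a ∈ range (c + 1), (f (a + 1) - f a) * g a := by
  rw [← sum_fiberwise_of_maps_to (g := blockIndex f c) (t := range (c + 1)) fun x hx =>
    mem_range.2 (Nat.lt_succ_of_le (blockIndex_spec h0 (mem_range.1 hx)).2.2)]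
  refine sum_congr rfl fun a ha => ?_
  have hblock : (range (f (c + 1))).filter (fun x => blockIndex f c x = a) = Ico (f a) (f (a + 1)) := by
    ext x
    simp only [mem_filter, mem_range, mem_Ico]
    constructor
    · rintro ⟨hx, rfl⟩
      exact ⟨(blockIndex_spec h0 hx).1, (blockIndex_spec h0 hx).2.1⟩
    · rintro ⟨h1, h2⟩
      have hac : a ≤ c := Nat.lt_succ_iff.1 (mem_range.1 ha)
      exact ⟨h2.trans_le (hf (Nat.succ_le_succ hac)), blockIndex_eq hf hac h1 h2⟩
  rw [sum_congr rfl fun x hx => congrArg g (mem_filter.1 hx).2, sum_const, hblock, Nat.card_Ico,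
    smul_eq_mul]

theorem exists_succ_le_and_lt {n x : ℕ} (hfn : f (n + 1) = 0)
    (hc : c ≤ n) (hx : x < f c) : ∃ b, c ≤ b ∧ b ≤ n ∧ f (b + 1) ≤ x ∧ x < f b := by
  have hspec := Nat.findGreatest_spec (P := fun b => x < f b) hc hx
  have hle := Nat.findGreatest_le (P := fun b => x < f b) n
  refine ⟨_, Nat.le_findGreatest hc hx, hle, ?_, hspec⟩
  by_contra hcon
  rcases hle.eq_or_lt with hbn | hbn
  · rw [hbn, hfn] at hcon
    omega
  · have := Nat.le_findGreatest (P := fun b => x < f b) hbn (not_le.1 hcon)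
    omega

end BlockIndex

section StrandCounts

-- Here `s a b` is the number of strands from column `a` to column `b`.
variable (n : ℕ) (s : ℕ → ℕ → ℕ)

def reaching (a b : ℕ) : ℕ := ∑ b' ∈ Icc b n, s a b'

def aliveBefore (c a : ℕ) : ℕ := ∑ a' ∈ range a, reaching n s a' c

def endingBefore (c a : ℕ) : ℕ := ∑ a' ∈ range a, s a' (c - 1)

theorem reaching_eq_add {a b : ℕ} (h : b ≤ n) : reaching n s a b = s a b + reaching n s a (b + 1) := by
  rw [reaching, reaching, ← insert_Icc_add_one_left_eq_Icc h, sum_insert (by simp)]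

theorem reaching_anti (a : ℕ) : Antitone (reaching n s a) := fun _ _ h =>
  sum_le_sum_of_subset (Icc_subset_Icc_left h)

theorem aliveBefore_mono (c : ℕ) : Monotone (aliveBefore n s c) := fun _ _ h =>
  sum_le_sum_of_subset (range_subset_range.mpr h)

theorem endingBefore_mono (c : ℕ) : Monotone (endingBefore s c) := fun _ _ h =>
  sum_le_sum_of_subset (range_subset_range.mpr h)

theorem aliveBefore_succ (c a : ℕ) :
    aliveBefore n s c (a + 1) = aliveBefore n s c a + reaching n s a c :=
  sum_range_succ _ _

theorem endingBefore_succ (c a : ℕ) :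
    endingBefore s c (a + 1) = endingBefore s c a + s a (c - 1) :=
  sum_range_succ _ _

theorem aliveBefore_pred {c : ℕ} (hc1 : 1 ≤ c) (hcn : c ≤ n) (a : ℕ) :
    aliveBefore n s (c - 1) a = aliveBefore n s c a + endingBefore s c a := by
  rw [aliveBefore, aliveBefore, endingBefore, ← sum_add_distrib]
  refine sum_congr rfl fun a' _ => ?_
  rw [reaching_eq_add n s (by omega), Nat.sub_add_cancel hc1, add_comm]

def strandStart (c q : ℕ) : ℕ := blockIndex (aliveBefore n s c) c q

def endingStart (c k : ℕ) : ℕ := blockIndex (endingBefore s c) c k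

variable {n s}

theorem strandStart_eq {c q a : ℕ} (ha : a ≤ c) (h1 : aliveBefore n s c a ≤ q)
    (h2 : q < aliveBefore n s c (a + 1)) : strandStart n s c q = a :=
  blockIndex_eq (aliveBefore_mono n s c) ha h1 h2

theorem endingStart_eq {c k a : ℕ} (ha : a ≤ c) (h1 : endingBefore s c a ≤ k)
    (h2 : k < endingBefore s c (a + 1)) : endingStart s c k = a :=
  blockIndex_eq (endingBefore_mono s c) ha h1 h2

end StrandCounts

section Leftmost

variable (n : ℕ) (e : ℕ → ℕ) (s : ℕ → ℕ → ℕ)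

/-- Column `c ≥ 1` of the leftmost diagram, sending positions in column `c` to positions in
column `c - 1`. In every column the strands are listed by start column, ties broken by
decreasing end column; the positions `e c, e c + 1, …` below the dots of column `c` stand for
the strands ending at column `c - 1` (ordered by start column), and the strands starting at
column `c` are sent below the dots of column `c - 1`. -/
def leftmostFun (c q : ℕ) : ℕ :=
  if q < aliveBefore n s c c then q + endingBefore s c (strandStart n s c q)
  else if q < e c then e (c - 1) + (q - aliveBefore n s c c)
  else if q < e c + endingBefore s c c then
    aliveBefore n s (c - 1) (endingStart s c (q - e c)) + reaching n s (endingStart s c (q - e c)) c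
      + (q - e c - endingBefore s c (endingStart s c (q - e c)))
  else q

def leftmostInv (c v : ℕ) : ℕ :=
  if v < e (c - 1) then
    if v < aliveBefore n s (c - 1) (strandStart n s (c - 1) v)
        + reaching n s (strandStart n s (c - 1) v) c then
      v - endingBefore s c (strandStart n s (c - 1) v)
    else e c + endingBefore s c (strandStart n s (c - 1) v)
      + (v - (aliveBefore n s (c - 1) (strandStart n s (c - 1) v)
        + reaching n s (strandStart n s (c - 1) v) c))
  else if v < e (c - 1) + (e c - aliveBefore n s c c) then aliveBefore n s c c + (v - e (c - 1))
  else v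

variable {n e s} {c : ℕ} (hc1 : 1 ≤ c) (hcn : c ≤ n)

include hc1 hcn

theorem aliveBefore_pred_succ (a : ℕ) :
    aliveBefore n s (c - 1) (a + 1) = aliveBefore n s (c - 1) a + s a (c - 1) + reaching n s a c := by
  rw [aliveBefore_succ, reaching_eq_add n s (by omega), Nat.sub_add_cancel hc1, add_assoc]

theorem leftmostFun_continuing {a t : ℕ} (ha : a < c) (ht : t < reaching n s a c) :
    leftmostFun n e s c (aliveBefore n s c a + t) = aliveBefore n s (c - 1) a + t := by
  have hsucc := aliveBefore_succ n s c a
  have hstart : strandStart n s c (aliveBefore n s c a + t) = a :=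
    strandStart_eq ha.le (by omega) (by omega)
  have := aliveBefore_mono n s c (show a + 1 ≤ c from ha)
  rw [leftmostFun, if_pos (by omega), hstart, aliveBefore_pred n s hc1 hcn]
  omega

theorem leftmostInv_continuing (he : e (c - 1) = aliveBefore n s (c - 1) c) {a t : ℕ}
    (ha : a < c) (ht : t < reaching n s a c) :
    leftmostInv n e s c (aliveBefore n s (c - 1) a + t) = aliveBefore n s c a + t := by
  have hsucc := aliveBefore_pred_succ hc1 hcn (s := s) a
  have hstart : strandStart n s (c - 1) (aliveBefore n s (c - 1) a + t) = a :=
    strandStart_eq (by omega) (by omega) (by omega)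
  have := aliveBefore_mono n s (c - 1) (show a + 1 ≤ c from ha)
  rw [leftmostInv, if_pos (by omega), hstart, if_pos (by omega), aliveBefore_pred n s hc1 hcn]
  omega

theorem leftmostInv_ending (he : e (c - 1) = aliveBefore n s (c - 1) c) {a t : ℕ} (ha : a < c)
    (ht : t < s a (c - 1)) :
    leftmostInv n e s c (aliveBefore n s (c - 1) a + reaching n s a c + t) =
      e c + endingBefore s c a + t := by
  have hsucc := aliveBefore_pred_succ hc1 hcn (s := s) a
  have hstart : strandStart n s (c - 1) (aliveBefore n s (c - 1) a + reaching n s a c + t) = a :=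
    strandStart_eq (by omega) (by omega) (by omega)
  have := aliveBefore_mono n s (c - 1) (show a + 1 ≤ c from ha)
  rw [leftmostInv, if_pos (by omega), hstart, if_neg (by omega)]
  omega

omit hc1 hcn

theorem leftmostFun_ending (hGe : aliveBefore n s c c ≤ e c) {a t : ℕ} (ha : a < c)
    (ht : t < s a (c - 1)) :
    leftmostFun n e s c (e c + endingBefore s c a + t) =
      aliveBefore n s (c - 1) a + reaching n s a c + t := by
  have hsucc := endingBefore_succ s c a
  have hstart : endingStart s c (e c + endingBefore s c a + t - e c) = a :=
    endingStart_eq ha.le (by omega) (by omega)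
  have := endingBefore_mono s c (show a + 1 ≤ c from ha)
  rw [leftmostFun, if_neg (by omega), if_neg (by omega), if_pos (by omega), hstart]
  omega

theorem leftmostFun_born {t : ℕ} (ht : aliveBefore n s c c + t < e c) :
    leftmostFun n e s c (aliveBefore n s c c + t) = e (c - 1) + t := by
  rw [leftmostFun, if_neg (by omega), if_pos ht]
  omega

theorem leftmostInv_born {t : ℕ} (ht : aliveBefore n s c c + t < e c) :
    leftmostInv n e s c (e (c - 1) + t) = aliveBefore n s c c + t := by
  rw [leftmostInv, if_neg (by omega), if_pos (by omega)]
  omega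

theorem leftmostFun_of_le (hGe : aliveBefore n s c c ≤ e c) {q : ℕ}
    (hq : e c + endingBefore s c c ≤ q) : leftmostFun n e s c q = q := by
  rw [leftmostFun]
  split_ifs <;> omega

theorem leftmostInv_of_le {v : ℕ} (hv : e (c - 1) + (e c - aliveBefore n s c c) ≤ v) :
    leftmostInv n e s c v = v := by
  rw [leftmostInv]
  split_ifs <;> omega

variable (hs : ∀ c, c ≤ n → e c = aliveBefore n s c (c + 1))

include hs hc1 hcn

theorem e_pred_eq : e (c - 1) = aliveBefore n s (c - 1) c := by
  simpa only [Nat.sub_add_cancel hc1] using hs (c - 1) (by omega)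

theorem aliveBefore_add_endingBefore : aliveBefore n s c c + endingBefore s c c = e (c - 1) := by
  rw [e_pred_eq hc1 hcn hs, aliveBefore_pred n s hc1 hcn]

omit hc1 in
theorem aliveBefore_self_le : aliveBefore n s c c ≤ e c := by
  rw [hs c hcn]
  exact aliveBefore_mono n s c c.le_succ

omit hc1 in
theorem leftmost_cases (q : ℕ) :
    (∃ a < c, ∃ t < reaching n s a c, q = aliveBefore n s c a + t) ∨
      (∃ t, aliveBefore n s c c + t < e c ∧ q = aliveBefore n s c c + t) ∨
      (∃ a < c, ∃ t < s a (c - 1), q = e c + endingBefore s c a + t) ∨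
      e c + endingBefore s c c ≤ q := by
  have hGe := aliveBefore_self_le hcn hs
  by_cases hcont : q < aliveBefore n s c c
  · obtain ⟨a, ha, t, ht, rfl⟩ := exists_block (aliveBefore_mono n s c) rfl hcont
    rw [aliveBefore_succ] at ht
    exact Or.inl ⟨a, ha, t, by omega, rfl⟩
  by_cases hborn : q < e c
  · exact Or.inr (Or.inl ⟨q - aliveBefore n s c c, by omega, by omega⟩)
  by_cases hend : q < e c + endingBefore s c c
  · obtain ⟨a, ha, t, ht, hq⟩ :=
      exists_block (endingBefore_mono s c) rfl (show q - e c < endingBefore s c c by omega)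
    rw [endingBefore_succ] at ht
    exact Or.inr (Or.inr (Or.inl ⟨a, ha, t, by omega, by omega⟩))
  exact Or.inr (Or.inr (Or.inr (by omega)))

theorem leftmostInv_leftmostFun (q : ℕ) : leftmostInv n e s c (leftmostFun n e s c q) = q := by
  have he := e_pred_eq hc1 hcn hs
  have hsum := aliveBefore_add_endingBefore hc1 hcn hs
  have hGe := aliveBefore_self_le hcn hs
  rcases leftmost_cases hcn hs q with ⟨a, ha, t, ht, rfl⟩ | ⟨t, ht, rfl⟩ | ⟨a, ha, t, ht, rfl⟩ | hfix
  · rw [leftmostFun_continuing hc1 hcn ha ht, leftmostInv_continuing hc1 hcn he ha ht]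
  · rw [leftmostFun_born ht, leftmostInv_born ht]
  · rw [leftmostFun_ending hGe ha ht, leftmostInv_ending hc1 hcn he ha ht]
  · rw [leftmostFun_of_le hGe hfix, leftmostInv_of_le (by omega)]

theorem leftmostFun_leftmostInv (v : ℕ) : leftmostFun n e s c (leftmostInv n e s c v) = v := by
  have he := e_pred_eq hc1 hcn hs
  have hsum := aliveBefore_add_endingBefore hc1 hcn hs
  have hGe := aliveBefore_self_le hcn hs
  by_cases hold : v < e (c - 1)
  · obtain ⟨a, ha, t, ht, rfl⟩ := exists_block (aliveBefore_mono n s (c - 1)) rfl (he ▸ hold)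
    rw [aliveBefore_pred_succ hc1 hcn] at ht
    by_cases hcont : t < reaching n s a c
    · rw [leftmostInv_continuing hc1 hcn he ha hcont, leftmostFun_continuing hc1 hcn ha hcont]
    · obtain ⟨u, rfl⟩ : ∃ u, t = reaching n s a c + u := ⟨t - reaching n s a c, by omega⟩
      rw [← add_assoc, leftmostInv_ending hc1 hcn he ha (by omega),
        leftmostFun_ending hGe ha (by omega)]
  by_cases hborn : v < e (c - 1) + (e c - aliveBefore n s c c)
  · obtain ⟨t, rfl⟩ : ∃ t, v = e (c - 1) + t := ⟨v - e (c - 1), by omega⟩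
    rw [leftmostInv_born (by omega), leftmostFun_born (by omega)]
  rw [leftmostInv_of_le (by omega), leftmostFun_of_le hGe (by omega)]

end Leftmost

section LeftmostInversions

variable {n : ℕ} {e : ℕ → ℕ} {s : ℕ → ℕ → ℕ} (hs : ∀ c, c ≤ n → e c = aliveBefore n s c (c + 1))
  {c : ℕ} (hc1 : 1 ≤ c) (hcn : c ≤ n)

include hs hc1 hcn

theorem leftmostFun_ending_lt_continuing_iff {a t a' t' : ℕ} (ha : a < c)
    (ht : t < reaching n s a c) (ha' : a' < c) (ht' : t' < s a' (c - 1)) :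
    leftmostFun n e s c (e c + endingBefore s c a' + t') <
      leftmostFun n e s c (aliveBefore n s c a + t) ↔ a' < a := by
  have := aliveBefore_pred_succ hc1 hcn (s := s) a
  have := aliveBefore_pred_succ hc1 hcn (s := s) a'
  rw [leftmostFun_continuing hc1 hcn ha ht, leftmostFun_ending (aliveBefore_self_le hcn hs) ha' ht']
  constructor
  · intro hlt
    by_contra! h
    rcases h.eq_or_lt with rfl | h
    · omega
    · have := aliveBefore_mono n s (c - 1) (show a + 1 ≤ a' from h)
      omega
  · intro h
    have := aliveBefore_mono n s (c - 1) (show a' + 1 ≤ a from h)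
    omega

theorem leftmostFun_lt_iff_of_continuing {a t y : ℕ} (ha : a < c) (ht : t < reaching n s a c)
    (hxy : aliveBefore n s c a + t < y) :
    leftmostFun n e s c y < leftmostFun n e s c (aliveBefore n s c a + t) ↔
      e c ≤ y ∧ y < e c + endingBefore s c a := by
  have hGe := aliveBefore_self_le hcn hs
  have := aliveBefore_succ n s c a
  have := aliveBefore_mono n s c (show a + 1 ≤ c from ha)
  have := aliveBefore_mono n s (c - 1) (show a + 1 ≤ c from ha)
  have := aliveBefore_pred_succ hc1 hcn (s := s) a
  rcases leftmost_cases hcn hs y with ⟨a', ha', t', ht', rfl⟩ | ⟨t', ht', rfl⟩ |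
    ⟨a', ha', t', ht', rfl⟩ | hfix
  · have := aliveBefore_succ n s c a'
    have := aliveBefore_mono n s c (show a' + 1 ≤ c from ha')
    have haa' := le_of_block_le_block (aliveBefore_mono n s c) le_self_add
      (show _ < aliveBefore n s c (a' + 1) by omega) hxy.le
    rw [leftmostFun_continuing hc1 hcn ha ht, leftmostFun_continuing hc1 hcn ha' ht']
    rcases haa'.eq_or_lt with rfl | hlt
    · omega
    · have := aliveBefore_mono n s (c - 1) (show a + 1 ≤ a' from hlt)
      omega
  · have := e_pred_eq hc1 hcn hs
    rw [leftmostFun_continuing hc1 hcn ha ht, leftmostFun_born ht']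
    omega
  · have := endingBefore_succ s c a'
    rw [leftmostFun_ending_lt_continuing_iff hs hc1 hcn ha ht ha' ht']
    constructor
    · intro h
      have := endingBefore_mono s c (show a' + 1 ≤ a from h)
      omega
    · rintro ⟨-, hlt⟩
      by_contra! h
      have := endingBefore_mono s c h
      omega
  · have := endingBefore_mono s c ha.le
    have := aliveBefore_add_endingBefore hc1 hcn hs
    have := e_pred_eq hc1 hcn hs
    rw [leftmostFun_continuing hc1 hcn ha ht, leftmostFun_of_le hGe hfix]
    omega

theorem leftmostFun_lt_iff_of_born {t y : ℕ} (ht : aliveBefore n s c c + t < e c)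
    (hxy : aliveBefore n s c c + t < y) :
    leftmostFun n e s c y < leftmostFun n e s c (aliveBefore n s c c + t) ↔
      e c ≤ y ∧ y < e c + endingBefore s c c := by
  have hsum := aliveBefore_add_endingBefore hc1 hcn hs
  have hGe := aliveBefore_self_le hcn hs
  rw [leftmostFun_born ht]
  rcases leftmost_cases hcn hs y with ⟨a', ha', t', ht', rfl⟩ | ⟨t', ht', rfl⟩ |
    ⟨a', ha', t', ht', rfl⟩ | hfix
  · have := aliveBefore_mono n s c (show a' + 1 ≤ c from ha')
    have := aliveBefore_succ n s c a'
    omega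
  · rw [leftmostFun_born ht']
    omega
  · have := aliveBefore_pred_succ hc1 hcn (s := s) a'
    have := aliveBefore_mono n s (c - 1) (show a' + 1 ≤ c from ha')
    have := endingBefore_mono s c (show a' + 1 ≤ c from ha')
    have := endingBefore_succ s c a'
    have := e_pred_eq hc1 hcn hs
    rw [leftmostFun_ending hGe ha' ht']
    omega
  · rw [leftmostFun_of_le hGe hfix]
    omega

theorem leftmostFun_ending_le {a t y : ℕ} (ha : a < c) (ht : t < s a (c - 1))
    (hxy : e c + endingBefore s c a + t ≤ y) :
    leftmostFun n e s c (e c + endingBefore s c a + t) ≤ leftmostFun n e s c y := by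
  have hsum := aliveBefore_add_endingBefore hc1 hcn hs
  have hGe := aliveBefore_self_le hcn hs
  have := aliveBefore_pred_succ hc1 hcn (s := s) a
  have := endingBefore_succ s c a
  rw [leftmostFun_ending hGe ha ht]
  rcases leftmost_cases hcn hs y with ⟨a', ha', t', ht', rfl⟩ | ⟨t', ht', rfl⟩ |
    ⟨a', ha', t', ht', rfl⟩ | hfix
  · have := aliveBefore_mono n s c (show a' + 1 ≤ c from ha')
    have := aliveBefore_succ n s c a'
    omega
  · omega
  · have haa' : a ≤ a' := le_of_block_le_block (endingBefore_mono s c) le_rfl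
      (show endingBefore s c a' + t' < endingBefore s c (a' + 1) by rw [endingBefore_succ]; omega)
      (by omega)
    rw [leftmostFun_ending hGe ha' ht']
    rcases haa'.eq_or_lt with rfl | h
    · omega
    · have := aliveBefore_mono n s (c - 1) (show a + 1 ≤ a' from h)
      omega
  · have := aliveBefore_mono n s (c - 1) (show a + 1 ≤ c from ha)
    have := e_pred_eq hc1 hcn hs
    rw [leftmostFun_of_le hGe hfix]
    omega

theorem leftmostFun_le_of_le {x y : ℕ} (hx : e c ≤ x) (hxy : x ≤ y) :
    leftmostFun n e s c x ≤ leftmostFun n e s c y := by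
  have hGe := aliveBefore_self_le hcn hs
  rcases leftmost_cases hcn hs x with ⟨a, ha, t, ht, rfl⟩ | ⟨t, ht, rfl⟩ |
    ⟨a, ha, t, ht, rfl⟩ | hfix
  · have := aliveBefore_mono n s c (show a + 1 ≤ c from ha)
    have := aliveBefore_succ n s c a
    omega
  · omega
  · exact leftmostFun_ending_le hs hc1 hcn ha ht hxy
  · rw [leftmostFun_of_le hGe hfix, leftmostFun_of_le hGe (hfix.trans hxy)]
    exact hxy

end LeftmostInversions

def leftmost (n : ℕ) (e : ℕ → ℕ) (s : ℕ → ℕ → ℕ)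
    (hs : ∀ c, c ≤ n → e c = aliveBefore n s c (c + 1)) : ℕ → Equiv.Perm ℕ := fun c =>
  if h : 1 ≤ c ∧ c ≤ n then
    ⟨leftmostFun n e s c, leftmostInv n e s c, leftmostInv_leftmostFun h.1 h.2 hs,
      leftmostFun_leftmostInv h.1 h.2 hs⟩
  else 1

section LeftmostLace

variable {n : ℕ} {e : ℕ → ℕ} {s : ℕ → ℕ → ℕ} (hs : ∀ c, c ≤ n → e c = aliveBefore n s c (c + 1))
  {c : ℕ}

theorem leftmost_apply (hc1 : 1 ≤ c) (hcn : c ≤ n) (q : ℕ) :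
    leftmost n e s hs c q = leftmostFun n e s c q := by
  rw [leftmost, dif_pos ⟨hc1, hcn⟩]
  rfl

theorem leftmost_inv_apply (hc1 : 1 ≤ c) (hcn : c ≤ n) (v : ℕ) :
    (leftmost n e s hs c)⁻¹ v = leftmostInv n e s c v := by
  rw [leftmost, dif_pos ⟨hc1, hcn⟩]
  rfl

include hs in
theorem leftmostInv_le_succ (hc1 : 1 ≤ c) (hcn : c ≤ n) {k : ℕ} (hk : e (c - 1) ≤ k) :
    leftmostInv n e s c k ≤ leftmostInv n e s c (k + 1) := by
  have := aliveBefore_add_endingBefore hc1 hcn hs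
  rw [leftmostInv, leftmostInv]
  split_ifs <;> omega

theorem isLace_leftmost : IsLace n e (leftmost n e s hs) := by
  refine ⟨fun i hi => by rw [leftmost, dif_neg (by omega)], fun i hi1 hi2 => ⟨?_, ?_, ?_⟩⟩
  · refine (Set.finite_Iio (e i + endingBefore s i i)).subset fun x hx => ?_
    by_contra hcon
    exact hx (by rw [leftmost_apply hs hi1 hi2,
      leftmostFun_of_le (aliveBefore_self_le hi2 hs) (not_lt.1 hcon)])
  · intro k hk
    by_contra hcon
    rw [leftmost_apply hs hi1 hi2, leftmost_apply hs hi1 hi2] at hk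
    exact absurd hk (not_lt.2 (leftmostFun_le_of_le hs hi1 hi2 (not_lt.1 hcon) k.le_succ))
  · intro k hk
    by_contra hcon
    rw [leftmost_inv_apply hs hi1 hi2, leftmost_inv_apply hs hi1 hi2] at hk
    exact absurd hk (not_lt.2 (leftmostInv_le_succ hs hi1 hi2 (not_lt.1 hcon)))

end LeftmostLace

section LeftmostRank

variable {n : ℕ} {e : ℕ → ℕ} {s : ℕ → ℕ → ℕ} (hs : ∀ c, c ≤ n → e c = aliveBefore n s c (c + 1))

def strandPos (n : ℕ) (s : ℕ → ℕ → ℕ) (c a b t : ℕ) : ℕ :=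
  aliveBefore n s c a + reaching n s a (b + 1) + t

theorem strandPos_lt_aliveBefore {c a b t : ℕ} (hb : c ≤ b) (hbn : b ≤ n) (ht : t < s a b) :
    strandPos n s c a b t < aliveBefore n s c (a + 1) := by
  have := reaching_eq_add n s (a := a) hbn
  have := reaching_anti n s a hb
  rw [strandPos, aliveBefore_succ]
  omega

include hs in
theorem strandPos_lt {c a b t : ℕ} (ha : a ≤ c) (hb : c ≤ b) (hbn : b ≤ n) (ht : t < s a b) :
    strandPos n s c a b t < e c := by
  have := strandPos_lt_aliveBefore hb hbn ht
  have := aliveBefore_mono n s c (show a + 1 ≤ c + 1 by omega)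
  rw [hs c (hb.trans hbn)]
  omega

theorem strandPos_inj {c a b t a' b' t' : ℕ} (hb : c ≤ b) (hbn : b ≤ n) (ht : t < s a b)
    (hb' : c ≤ b') (hbn' : b' ≤ n) (ht' : t' < s a' b')
    (heq : strandPos n s c a b t = strandPos n s c a' b' t') : a = a' ∧ b = b' ∧ t = t' := by
  have hlt := strandPos_lt_aliveBefore hb hbn ht
  have hlt' := strandPos_lt_aliveBefore hb' hbn' ht'
  have hge : aliveBefore n s c a ≤ strandPos n s c a b t := by
    rw [strandPos, add_assoc]
    exact le_self_add
  have hge' : aliveBefore n s c a' ≤ strandPos n s c a' b' t' := by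
    rw [strandPos, add_assoc]
    exact le_self_add
  obtain rfl : a = a' := le_antisymm
    (le_of_block_le_block (aliveBefore_mono n s c) hge hlt' heq.le)
    (le_of_block_le_block (aliveBefore_mono n s c) hge' hlt heq.ge)
  unfold strandPos at heq hlt hlt'
  have hsplit := reaching_eq_add n s (a := a) hbn
  have hsplit' := reaching_eq_add n s (a := a) hbn'
  obtain rfl : b = b' := by
    by_contra hne
    rcases Nat.lt_or_gt_of_ne hne with h | h
    · have := reaching_anti n s a (show b + 1 ≤ b' from h)
      omega
    · have := reaching_anti n s a (show b' + 1 ≤ b from h)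
      omega
  exact ⟨rfl, rfl, by omega⟩

include hs in
theorem exists_strandPos_eq {c q : ℕ} (hc : c ≤ n) (hq : q < e c) :
    ∃ a b t, a ≤ c ∧ c ≤ b ∧ b ≤ n ∧ t < s a b ∧ strandPos n s c a b t = q := by
  obtain ⟨a, ha, x, hx, rfl⟩ := exists_block (aliveBefore_mono n s c) rfl (hs c hc ▸ hq)
  rw [aliveBefore_succ] at hx
  have hfn : reaching n s a (n + 1) = 0 := by simp [reaching]
  obtain ⟨b, hcb, hbn, hb1, hb2⟩ :=
    exists_succ_le_and_lt hfn hc (show x < reaching n s a c by omega)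
  have := reaching_eq_add n s (a := a) hbn
  exact ⟨a, b, x - reaching n s a (b + 1), by omega, hcb, hbn, by omega, by rw [strandPos]; omega⟩

variable {c : ℕ} (hc1 : 1 ≤ c) (hcn : c ≤ n)

include hc1 hcn in
theorem leftmostFun_strandPos {a b t : ℕ} (ha : a < c) (hb : c ≤ b) (hbn : b ≤ n) (ht : t < s a b) :
    leftmostFun n e s c (strandPos n s c a b t) = strandPos n s (c - 1) a b t := by
  have := reaching_eq_add n s (a := a) hbn
  have := reaching_anti n s a hb
  rw [strandPos, add_assoc, leftmostFun_continuing hc1 hcn ha (by omega), strandPos, add_assoc]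

include hs hc1 hcn in
theorem leftmostInv_strandPos {a t : ℕ} (ha : a < c) (ht : t < s a (c - 1)) :
    leftmostInv n e s c (strandPos n s (c - 1) a (c - 1) t) = e c + endingBefore s c a + t := by
  rw [strandPos, Nat.sub_add_cancel hc1]
  exact leftmostInv_ending hc1 hcn (e_pred_eq hc1 hcn hs) ha ht

theorem chain_leftmost_strandPos {a i k b t : ℕ} (ha : a ≤ i) (hik : i ≤ k) (hkb : k ≤ b)
    (hbn : b ≤ n) (ht : t < s a b) :
    chain (leftmost n e s hs) i k (strandPos n s i a b t) = strandPos n s k a b t := by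
  induction k, hik using Nat.le_induction with
  | base => rw [chain_self]
  | succ k hik ih =>
    have h := leftmostFun_strandPos (e := e) (c := k + 1) (by omega) (by omega) (by omega) hkb hbn ht
    rw [Nat.add_sub_cancel] at h
    rw [chain_succ _ hik, ih (by omega), Equiv.Perm.inv_eq_iff_eq,
      leftmost_apply hs (by omega) (by omega), h]

theorem chain_leftmost_strandPos_succ {a i b t : ℕ} (ha : a ≤ i) (hib : i ≤ b) (hbn : b + 1 ≤ n)
    (ht : t < s a b) :
    chain (leftmost n e s hs) i (b + 1) (strandPos n s i a b t) =
      e (b + 1) + endingBefore s (b + 1) a + t := by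
  have h := leftmostInv_strandPos hs (c := b + 1) (by omega) hbn (a := a) (by omega) (by simpa using ht)
  rw [Nat.add_sub_cancel] at h
  rw [chain_succ _ hib, chain_leftmost_strandPos hs ha hib le_rfl (by omega) ht,
    leftmost_inv_apply hs (by omega) hbn, h]

def strandsThrough (n : ℕ) (s : ℕ → ℕ → ℕ) (i j : ℕ) : Finset ((ℕ × ℕ) × ℕ) :=
  (range (i + 1) ×ˢ Icc j n).biUnion fun ab => (range (s ab.1 ab.2)).image (Prod.mk ab)

theorem survivors_leftmost {i j : ℕ} (hij : i ≤ j) (hjn : j ≤ n) :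
    survivors e (leftmost n e s hs) i j =
      (strandsThrough n s i j).image fun x => strandPos n s i x.1.1 x.1.2 x.2 := by
  ext q
  rw [mem_survivors, mem_image]
  constructor
  · rintro ⟨hq, hsurv⟩
    obtain ⟨a, b, t, ha, hb, hbn, ht, rfl⟩ := exists_strandPos_eq hs (by omega) hq
    refine ⟨((a, b), t), ?_, rfl⟩
    rw [strandsThrough, mem_biUnion_image_prodMk, mem_product, mem_range, mem_Icc, mem_range]
    dsimp only
    refine ⟨⟨by omega, ?_, hbn⟩, ht⟩
    by_contra hcon
    have hd := chain_leftmost_strandPos_succ hs ha hb (by omega) ht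
    have := hsurv (b + 1) (by omega) (by omega)
    omega
  · rintro ⟨⟨⟨a, b⟩, t⟩, hmem, rfl⟩
    rw [strandsThrough, mem_biUnion_image_prodMk, mem_product, mem_range, mem_Icc, mem_range] at hmem
    obtain ⟨⟨ha, hjb, hbn⟩, ht⟩ := hmem
    dsimp only at ha hjb hbn ht ⊢
    refine ⟨strandPos_lt hs (by omega) (by omega) hbn ht, fun k hik hkj => ?_⟩
    rw [chain_leftmost_strandPos hs (by omega) hik.le (by omega) hbn ht]
    exact strandPos_lt hs (by omega) (by omega) hbn ht

theorem rank_leftmost {i j : ℕ} (hij : i ≤ j) (hjn : j ≤ n) :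
    rank e (leftmost n e s hs) i j = aliveBefore n s j (i + 1) := by
  rw [rank_eq_card_survivors, survivors_leftmost hs hij hjn, card_image_of_injOn,
    strandsThrough, card_biUnion_image_prodMk, sum_product]
  · simp only [card_range]
    rfl
  rintro ⟨⟨a, b⟩, t⟩ h1 ⟨⟨a', b'⟩, t'⟩ h2 heq
  simp only [strandsThrough, mem_coe, mem_biUnion_image_prodMk, mem_product, mem_range,
    mem_Icc] at h1 h2
  obtain ⟨rfl, rfl, rfl⟩ := strandPos_inj (by omega) h1.1.2.2 h1.2 (by omega) h2.1.2.2 h2.2 heq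
  rfl

end LeftmostRank

section LeftmostLength

variable {n : ℕ} {e : ℕ → ℕ} {s : ℕ → ℕ → ℕ} (hs : ∀ c, c ≤ n → e c = aliveBefore n s c (c + 1))
  {c : ℕ} (hc1 : 1 ≤ c) (hcn : c ≤ n)

include hc1 hcn

theorem mem_inversionFinset_leftmost {x y : ℕ} :
    (x, y) ∈ inversionFinset (leftmost n e s hs c) (e c + endingBefore s c c) ↔
      x < e c ∧ e c ≤ y ∧ y < e c + endingBefore s c (strandStart n s c x) := by
  have hGe := aliveBefore_self_le hcn hs
  rw [mem_inversionFinset fun q hq => by rw [leftmost_apply hs hc1 hcn, leftmostFun_of_le hGe hq],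
    leftmost_apply hs hc1 hcn, leftmost_apply hs hc1 hcn]
  rcases leftmost_cases hcn hs x with ⟨a, ha, t, ht, rfl⟩ | ⟨t, ht, rfl⟩ | hend | hfix
  · have hsucc := aliveBefore_succ n s c a
    have hmono := aliveBefore_mono n s c (show a + 1 ≤ c from ha)
    rw [strandStart_eq ha.le le_self_add (by omega)]
    constructor
    · rintro ⟨hxy, hlt⟩
      exact ⟨by omega, (leftmostFun_lt_iff_of_continuing hs hc1 hcn ha ht hxy).1 hlt⟩
    · rintro ⟨-, hy⟩
      have hxy : aliveBefore n s c a + t < y := by omega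
      exact ⟨hxy, (leftmostFun_lt_iff_of_continuing hs hc1 hcn ha ht hxy).2 hy⟩
  · rw [strandStart_eq le_rfl le_self_add (hs c hcn ▸ ht)]
    constructor
    · rintro ⟨hxy, hlt⟩
      exact ⟨ht, (leftmostFun_lt_iff_of_born hs hc1 hcn ht hxy).1 hlt⟩
    · rintro ⟨-, hy⟩
      have hxy : aliveBefore n s c c + t < y := by omega
      exact ⟨hxy, (leftmostFun_lt_iff_of_born hs hc1 hcn ht hxy).2 hy⟩
  all_goals
    have hx : e c ≤ x := by
      first
      | obtain ⟨a, -, t, -, rfl⟩ := hend; omega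
      | omega
    exact iff_of_false (fun ⟨hxy, hlt⟩ => absurd (leftmostFun_le_of_le hs hc1 hcn hx hxy.le)
      (not_le.2 hlt)) (fun h => absurd h.1 (not_lt.2 hx))

theorem ell_leftmost :
    ell (leftmost n e s hs c) = ∑ a ∈ range (c + 1), reaching n s a c * endingBefore s c a := by
  have hGe := aliveBefore_self_le hcn hs
  have hinv : inversionFinset (leftmost n e s hs c) (e c + endingBefore s c c) =
      (range (e c)).biUnion fun x =>
        (Ico (e c) (e c + endingBefore s c (strandStart n s c x))).image (Prod.mk x) := by
    ext ⟨x, y⟩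
    rw [mem_inversionFinset_leftmost hs hc1 hcn, mem_biUnion_image_prodMk, mem_range, mem_Ico]
  rw [ell_eq_card_inversionFinset fun q hq => by
      rw [leftmost_apply hs hc1 hcn, leftmostFun_of_le hGe hq],
    hinv, card_biUnion_image_prodMk]
  simp only [Nat.card_Ico, Nat.add_sub_cancel_left]
  unfold strandStart
  rw [hs c hcn, sum_blockIndex (aliveBefore_mono n s c) rfl]
  exact sum_congr rfl fun a _ => by rw [aliveBefore_succ, Nat.add_sub_cancel_left]

end LeftmostLength

/-! ### Strand multiplicities of rank conditions -/

section RankConditions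

variable {n : ℕ} {e : ℕ → ℕ} {u : ℕ → Equiv.Perm ℕ} {r : ℕ → ℕ → ℕ} (hr : RankEq n e u r)

include hr

theorem RankEq.diag {c : ℕ} (hc : c ≤ n) : r c c = e c := by
  rw [← hr c c le_rfl hc, rank_eq_card_survivors, survivors_self, card_range]

theorem RankEq.anti {i j j' : ℕ} (hij : i ≤ j) (hjj' : j ≤ j') (hj'n : j' ≤ n) : r i j' ≤ r i j := by
  rw [← hr i j hij (hjj'.trans hj'n), ← hr i j' (hij.trans hjj') hj'n, rank_eq_card_survivors,
    rank_eq_card_survivors]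
  exact card_le_card (survivors_anti e u hjj')

theorem RankEq.le_succ_left {i j : ℕ} (hij : i + 1 ≤ j) (hjn : j ≤ n) : r i j ≤ r (i + 1) j := by
  rw [← hr i j (by omega) hjn, ← hr (i + 1) j hij hjn, rank_eq_card_survivors,
    rank_eq_card_survivors, card_survivors_eq_card_filter e u (show i < j by omega)]
  exact card_le_card (filter_subset _ _)

/-- The number of strands from column `i + 1` to column `j` is non-negative. -/
theorem RankEq.add_le_add {i j : ℕ} (hij : i + 1 ≤ j) (hjn : j + 1 ≤ n) :
    r i j + r (i + 1) (j + 1) ≤ r (i + 1) j + r i (j + 1) := by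
  rw [← hr i j (by omega) (by omega), ← hr (i + 1) (j + 1) (by omega) hjn,
    ← hr (i + 1) j hij (by omega), ← hr i (j + 1) (by omega) hjn]
  simp only [rank_eq_card_survivors]
  rw [card_survivors_eq_card_filter e u (show i < j by omega),
    card_survivors_eq_card_filter e u (show i < j + 1 by omega)]
  exact card_filter_add_card_le (survivors_anti e u (Nat.le_succ j)) _

end RankConditions

/-- `extRank n r a b = r (a - 1) b`, extended by zero to `a = 0` and to `b > n`. -/
def extRank (n : ℕ) (r : ℕ → ℕ → ℕ) (a b : ℕ) : ℕ :=
  if a = 0 ∨ n < b then 0 else r (a - 1) b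

/-- The number of strands from column `a` to column `b` forced by the rank conditions. -/
def strandMult (n : ℕ) (r : ℕ → ℕ → ℕ) (a b : ℕ) : ℕ :=
  if a ≤ b ∧ b ≤ n then
    (extRank n r (a + 1) b + extRank n r a (b + 1)) - (extRank n r a b + extRank n r (a + 1) (b + 1))
  else 0

section StrandMult

variable {n : ℕ} {e : ℕ → ℕ} {u : ℕ → Equiv.Perm ℕ} {r : ℕ → ℕ → ℕ} (hr : RankEq n e u r)

include hr

theorem extRank_add_le_add {a b : ℕ} (hab : a ≤ b) (hbn : b ≤ n) :
    extRank n r a b + extRank n r (a + 1) (b + 1) ≤ extRank n r (a + 1) b + extRank n r a (b + 1) := by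
  unfold extRank
  rcases a with _ | a
  · rcases hbn.eq_or_lt with rfl | hbn
    · simp
    · simpa [show ¬n < b by omega, show ¬n < b + 1 by omega] using hr.anti (i := 0) hab b.le_succ hbn
  · rcases hbn.eq_or_lt with rfl | hbn
    · simpa using hr.le_succ_left (show a + 1 ≤ b by omega) le_rfl
    · simpa [show ¬n < b by omega, show ¬n < b + 1 by omega] using hr.add_le_add hab hbn

theorem reaching_strandMult_add {a j : ℕ} (haj : a ≤ j) (hjn : j ≤ n + 1) :
    reaching n (strandMult n r) a j + extRank n r a j = extRank n r (a + 1) j := by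
  obtain ⟨d, hd⟩ : ∃ d, d = n + 1 - j := ⟨_, rfl⟩
  induction d generalizing j with
  | zero =>
    obtain rfl : j = n + 1 := by omega
    simp [reaching, extRank]
  | succ d ih =>
    have hrec := ih (j := j + 1) (by omega) (by omega) (by omega)
    have hineq := extRank_add_le_add hr haj (show j ≤ n by omega)
    rw [reaching_eq_add n _ (by omega), strandMult, if_pos ⟨haj, by omega⟩]
    omega

theorem aliveBefore_strandMult {a j : ℕ} (haj : a ≤ j + 1) (hjn : j ≤ n) :
    aliveBefore n (strandMult n r) j a = extRank n r a j := by
  induction a with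
  | zero => simp [aliveBefore, extRank]
  | succ a ih =>
    rw [aliveBefore_succ, ih (by omega), add_comm,
      reaching_strandMult_add hr (by omega) (by omega)]

theorem rank_eq_aliveBefore_strandMult {i j : ℕ} (hij : i ≤ j) (hjn : j ≤ n) :
    r i j = aliveBefore n (strandMult n r) j (i + 1) := by
  rw [aliveBefore_strandMult hr (by omega) hjn, extRank, if_neg (by omega), Nat.add_sub_cancel]

theorem e_eq_aliveBefore_strandMult :
    ∀ c, c ≤ n → e c = aliveBefore n (strandMult n r) c (c + 1) := fun c hc => by
  rw [← rank_eq_aliveBefore_strandMult hr le_rfl hc, hr.diag hc]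

end StrandMult

theorem codim_eq_sum_range (n : ℕ) (r : ℕ → ℕ → ℕ) :
    codim n r = ∑ j ∈ range n, ∑ i ∈ range (j + 1),
      (r i j - r i (j + 1)) * (r (i + 1) (j + 1) - r i (j + 1)) := by
  rw [codim, sum_comm, sum_range_succ']
  simp only [Nat.not_lt_zero, if_false, sum_const_zero, add_zero, Nat.add_sub_cancel]
  refine sum_congr rfl fun j hj => ?_
  rw [← sum_filter]
  congr 1
  ext i
  simp only [mem_filter, mem_range] at hj ⊢
  omega

section Final

variable {n : ℕ} {e : ℕ → ℕ} {u : ℕ → Equiv.Perm ℕ} {r : ℕ → ℕ → ℕ} (hr : RankEq n e u r)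

include hr

theorem rank_sub_rank_succ_right {i j : ℕ} (hij : i ≤ j) (hjn : j + 1 ≤ n) :
    r i j - r i (j + 1) = endingBefore (strandMult n r) (j + 1) (i + 1) := by
  have hpred := aliveBefore_pred n (strandMult n r) (c := j + 1) (by omega) hjn (i + 1)
  rw [Nat.add_sub_cancel] at hpred
  rw [rank_eq_aliveBefore_strandMult hr hij (by omega),
    rank_eq_aliveBefore_strandMult hr (by omega) hjn]
  omega

theorem rank_succ_left_sub_rank {i j : ℕ} (hij : i + 1 ≤ j) (hjn : j ≤ n) :
    r (i + 1) j - r i j = reaching n (strandMult n r) (i + 1) j := by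
  rw [rank_eq_aliveBefore_strandMult hr hij hjn, rank_eq_aliveBefore_strandMult hr (by omega) hjn,
    aliveBefore_succ]
  omega

theorem diagLength_leftmost :
    diagLength n (leftmost n e (strandMult n r) (e_eq_aliveBefore_strandMult hr)) = codim n r := by
  rw [diagLength, ← Ico_add_one_right_eq_Icc, sum_Ico_eq_sum_range, codim_eq_sum_range]
  refine sum_congr rfl fun j hj => ?_
  have hjn : j + 1 ≤ n := mem_range.1 hj
  rw [add_comm 1 j, ell_leftmost _ (by omega) hjn, sum_range_succ']
  simp only [endingBefore, range_zero, sum_empty, mul_zero, add_zero]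
  refine sum_congr rfl fun i hi => ?_
  have hij : i ≤ j := Nat.lt_succ_iff.1 (mem_range.1 hi)
  rw [rank_sub_rank_succ_right hr hij hjn, rank_succ_left_sub_rank hr (by omega) hjn, mul_comm]
  rfl

end Final

theorem length_ge_codim_general (n : ℕ) (e : ℕ → ℕ) (r : ℕ → ℕ → ℕ)
    (hr : ∃ u, IsLace n e u ∧ RankEq n e u r) :
    (∀ w, IsLace n e w → RankEq n e w r → codim n r ≤ diagLength n w) ∧
      ∃ w, IsLace n e w ∧ RankEq n e w r ∧ diagLength n w = codim n r := by
  obtain ⟨u, -, hu⟩ := hr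
  refine ⟨fun w hw hwr => codim_le_diagLength hw hwr, ?_⟩
  refine ⟨leftmost n e (strandMult n r) (e_eq_aliveBefore_strandMult hu), isLace_leftmost _,
    fun i j hij hjn => ?_, diagLength_leftmost hu⟩
  rw [rank_leftmost _ hij hjn, rank_eq_aliveBefore_strandMult hu hij hjn]

/-- every lace diagram with rank conditions `r` has length at least
`d r`, and `d r` is attained, i.e. the smallest possible length of a lace diagram
with rank conditions `r` is `d r`. -/
theorem length_ge_codim (n : ℕ) (hn : 1 ≤ n) (e : ℕ → ℕ) (r : ℕ → ℕ → ℕ)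
    (hr : ∃ u, IsLace n e u ∧ RankEq n e u r) :
    (∀ w, IsLace n e w → RankEq n e w r → codim n r ≤ diagLength n w) ∧
      ∃ w, IsLace n e w ∧ RankEq n e w r ∧ diagLength n w = codim n r :=
  length_ge_codim_general n e r hr
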